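/- Let r be a real-valued coherent risk measure on L^p(Ω; ℝ) that is comonotonically additive (r(ξ + η) = r(ξ) + r(η) whenever ξ, η are comonotonic) and admits the exact dual representation r(η) = sup_{ζ∈𝒵} E(−ηζ)/E(ζ) with 𝒵 ⊆ L^q(Ω; ℝ₊), E(ζ) > 0 for all ζ ∈ 𝒵. Let 𝐫 = (r,…,r) have all d components equal to r, let K ⊆ ℝ^d be a deterministic closed convex cone with ℝ₋^d ⊆ K ≠ ℝ^d, and let X ∈ L^p(Ω; ℝ^d) have pairwise comonotonic coordinates. Then ρ_s(X + K) = 𝐫(X) + Ǩ, where Ǩ = {−k : k ∈ K} and X + K is the set-valued portfolio ω ↦ X(ω) + K. -/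

import Mathlib

/-
The coherence axioms make `r` sublinear on nonnegative combinations, and comonotonic
additivity makes it linear on nonnegative combinations of the coordinates of `X`. For a
selection `ξ` of `X + K` with `𝐫(ξ) ≤ x` and a vector `u` of the dual cone of `K`, whose
coordinates are `≤ 0` because `ℝ₋^d ⊆ K`, the weights `w = -u ≥ 0` give
`⟪w, 𝐫(X)⟫ = r(⟪w, X⟫) ≤ r(⟪w, ξ⟫) ≤ ⟪w, 𝐫(ξ)⟫ ≤ ⟪w, x⟫`, the middle step by monotonicity as
`⟪w, ξ - X⟫ ≤ 0`. Hence `𝐫(X) - x` lies in the bidual of `K`, which is `K` itself. Conversely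
`X + 𝐫(X) - x` is a selection witnessing `x` whenever `𝐫(X) - x ∈ K`. So `ρ_{s,0}(X + K)` is
the closed set `𝐫(X) + Ǩ` and taking the closure changes nothing.
-/

open MeasureTheory Set Filter
open scoped Pointwise ENNReal RealInnerProductSpace

noncomputable section

/-- `ℝ^d` with the Euclidean norm. -/
abbrev Vec (d : ℕ) := EuclideanSpace ℝ (Fin d)

/-- Effros measurability of a set-valued map: `{ω : X(ω) ∩ G ≠ ∅}` is measurable
for every open `G`. -/
def EffrosMeasurable {Ω : Type*} [MeasurableSpace Ω] {d : ℕ} (X : Ω → Set (Vec d)) : Prop :=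
  ∀ G : Set (Vec d), IsOpen G → MeasurableSet {ω | (X ω ∩ G).Nonempty}

/-- A set-valued portfolio: an Effros-measurable map with nonempty closed convex
lower-set values. -/
structure IsPortfolio {Ω : Type*} [MeasurableSpace Ω] {d : ℕ} (X : Ω → Set (Vec d)) : Prop where
  effros : EffrosMeasurable X
  nonempty : ∀ ω, (X ω).Nonempty
  isClosed : ∀ ω, IsClosed (X ω)
  convex : ∀ ω, Convex ℝ (X ω)
  lower : ∀ ω, ∀ x ∈ X ω, ∀ y : Vec d, (∀ i, y i ≤ x i) → y ∈ X ω

/-- A real-valued coherent risk measure on `L^p(Ω; ℝ)`: monotone (antitone in the gain),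
cash invariant, subadditive and positively homogeneous. -/
structure IsCoherentR {Ω : Type*} [MeasurableSpace Ω] (μ : Measure Ω) (p : ℝ≥0∞)
    (r : (Ω → ℝ) → ℝ) : Prop where
  mono : ∀ ξ η : Ω → ℝ, MemLp ξ p μ → MemLp η p μ → (∀ᵐ ω ∂μ, ξ ω ≤ η ω) → r η ≤ r ξ
  cash : ∀ ξ : Ω → ℝ, MemLp ξ p μ → ∀ c : ℝ, r (fun ω => ξ ω + c) = r ξ - c
  subadd : ∀ ξ η : Ω → ℝ, MemLp ξ p μ → MemLp η p μ →
    r (fun ω => ξ ω + η ω) ≤ r ξ + r η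
  homog : ∀ ξ : Ω → ℝ, MemLp ξ p μ → ∀ c : ℝ, 0 < c →
    r (fun ω => c * ξ ω) = c * r ξ

/-- The selection risk measure `ρ_{s,0}(𝐗)` (real-valued marginal risk measures). -/
def rho0R {Ω : Type*} [MeasurableSpace Ω] (μ : Measure Ω) (p : ℝ≥0∞) {d : ℕ}
    (r : Fin d → (Ω → ℝ) → ℝ) (X : Ω → Set (Vec d)) : Set (Vec d) :=
  {x | ∃ ξ : Ω → Vec d, MemLp ξ p μ ∧ (∀ᵐ ω ∂μ, ξ ω ∈ X ω) ∧
        ∀ i, r i (fun ω => ξ ω i + x i) ≤ 0}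

/-- Two random variables are comonotonic if
`(ξ(ω) − ξ(ω'))(η(ω) − η(ω')) ≥ 0` for `P ⊗ P`-a.e. `(ω, ω')`. -/
def Comonotonic {Ω : Type*} [MeasurableSpace Ω] (μ : Measure Ω) (ξ η : Ω → ℝ) : Prop :=
  ∀ᵐ w ∂(μ.prod μ), 0 ≤ (ξ w.1 - ξ w.2) * (η w.1 - η w.2)

namespace IsCoherentR

variable {Ω ι : Type*} [MeasurableSpace Ω] {μ : Measure Ω} {p : ℝ≥0∞} {r : (Ω → ℝ) → ℝ}

theorem map_zero (hr : IsCoherentR μ p r) : r (fun _ => 0) = 0 := by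
  have h := hr.homog _ MemLp.zero' 2 two_pos
  simp only [mul_zero] at h
  linarith

theorem map_const_mul_of_nonneg (hr : IsCoherentR μ p r) {f : Ω → ℝ} (hf : MemLp f p μ)
    {c : ℝ} (hc : 0 ≤ c) : r (fun ω => c * f ω) = c * r f := by
  rcases hc.eq_or_lt with rfl | hc
  · simpa only [zero_mul] using hr.map_zero
  · exact hr.homog f hf c hc

theorem map_sum_mul_le (hr : IsCoherentR μ p r) {f : ι → Ω → ℝ} (hf : ∀ i, MemLp (f i) p μ)
    {w : ι → ℝ} (hw : ∀ i, 0 ≤ w i) (s : Finset ι) :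
    r (fun ω => ∑ i ∈ s, w i * f i ω) ≤ ∑ i ∈ s, w i * r (f i) := by
  classical
  induction s using Finset.induction_on with
  | empty => simp only [Finset.sum_empty, hr.map_zero, le_refl]
  | insert a s ha ih =>
    simp only [Finset.sum_insert ha]
    calc r (fun ω => w a * f a ω + ∑ i ∈ s, w i * f i ω)
        ≤ r (fun ω => w a * f a ω) + r (fun ω => ∑ i ∈ s, w i * f i ω) :=
          hr.subadd _ _ ((hf a).const_mul _) (memLp_finsetSum s fun i _ => (hf i).const_mul _)
      _ ≤ w a * r (f a) + ∑ i ∈ s, w i * r (f i) := by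
          rw [hr.map_const_mul_of_nonneg (hf a) (hw a)]
          exact add_le_add_right ih _

end IsCoherentR

def ComonotonicAdditive {Ω : Type*} [MeasurableSpace Ω] (μ : Measure Ω) (p : ℝ≥0∞)
    (r : (Ω → ℝ) → ℝ) : Prop :=
  ∀ ξ η : Ω → ℝ, MemLp ξ p μ → MemLp η p μ → Comonotonic μ ξ η →
    r (fun ω => ξ ω + η ω) = r ξ + r η

section Comonotone

variable {Ω ι : Type*} [MeasurableSpace Ω] {μ : Measure Ω}

theorem comonotonic_const_mul_sum {f : ι → Ω → ℝ} (hf : ∀ i j, Comonotonic μ (f i) (f j))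
    {w : ι → ℝ} (hw : ∀ i, 0 ≤ w i) (a : ι) (s : Finset ι) :
    Comonotonic μ (fun ω => w a * f a ω) (fun ω => ∑ i ∈ s, w i * f i ω) := by
  filter_upwards [(eventually_all_finset s).2 fun i _ => hf a i] with z hz
  have hsum : (w a * f a z.1 - w a * f a z.2) *
      (∑ i ∈ s, w i * f i z.1 - ∑ i ∈ s, w i * f i z.2) =
        ∑ i ∈ s, w a * w i * ((f a z.1 - f a z.2) * (f i z.1 - f i z.2)) := by
    rw [← Finset.sum_sub_distrib, Finset.mul_sum]
    exact Finset.sum_congr rfl fun i _ => by ring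
  rw [hsum]
  exact Finset.sum_nonneg fun i hi => mul_nonneg (mul_nonneg (hw a) (hw i)) (hz i hi)

theorem IsCoherentR.map_sum_mul_of_comonotonic {p : ℝ≥0∞} {r : (Ω → ℝ) → ℝ}
    (hr : IsCoherentR μ p r) (hcom : ComonotonicAdditive μ p r) {f : ι → Ω → ℝ}
    (hfp : ∀ i, MemLp (f i) p μ) (hf : ∀ i j, Comonotonic μ (f i) (f j))
    {w : ι → ℝ} (hw : ∀ i, 0 ≤ w i) (s : Finset ι) :
    r (fun ω => ∑ i ∈ s, w i * f i ω) = ∑ i ∈ s, w i * r (f i) := by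
  classical
  induction s using Finset.induction_on with
  | empty => simp only [Finset.sum_empty, hr.map_zero]
  | insert a s ha ih =>
    simp only [Finset.sum_insert ha]
    rw [hcom _ _ ((hfp a).const_mul _) (memLp_finsetSum s fun i _ => (hfp i).const_mul _)
      (comonotonic_const_mul_sum hf hw a s), hr.map_const_mul_of_nonneg (hfp a) (hw a), ih]

end Comonotone

theorem mem_of_forall_inner_nonneg {E : Type*} [NormedAddCommGroup E] [InnerProductSpace ℝ E]
    [CompleteSpace E] {K : Set E} (hKcl : IsClosed K) (hKconv : Convex ℝ K)
    (hKcone : ∀ c : ℝ, 0 < c → ∀ y ∈ K, c • y ∈ K) (h0K : (0 : E) ∈ K) {z : E}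
    (hz : ∀ u, (∀ y ∈ K, 0 ≤ ⟪y, u⟫) → 0 ≤ ⟪z, u⟫) : z ∈ K := by
  have hadd : ∀ x ∈ K, ∀ y ∈ K, x + y ∈ K := fun x hx y hy => by
    have h := hKcone 2 two_pos _ (hKconv hx hy (by norm_num : (0 : ℝ) ≤ 1 / 2)
      (by norm_num : (0 : ℝ) ≤ 1 / 2) (by norm_num))
    convert h using 1
    module
  let C : ConvexCone ℝ E := ⟨K, fun c hc y hy => hKcone c hc y hy, hadd⟩
  let P : ProperCone ℝ E := ⟨C.toPointedCone h0K, hKcl⟩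
  by_contra hzK
  obtain ⟨u, hu, hzu⟩ := P.hyperplane_separation' hzK
  exact hzu.not_ge (hz u hu)

section Portfolio

variable {Ω : Type*} [MeasurableSpace Ω] {μ : Measure Ω} {p : ℝ≥0∞} {d : ℕ}

theorem MeasureTheory.MemLp.coord {ξ : Ω → Vec d} (hξ : MemLp ξ p μ) (i : Fin d) :
    MemLp (fun ω => ξ ω i) p μ :=
  (EuclideanSpace.proj i : Vec d →L[ℝ] ℝ).comp_memLp' hξ

theorem Vec.inner_eq_sum (x y : Vec d) : ⟪x, y⟫ = ∑ i, y i * x i := by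
  simp [PiLp.inner_apply]

theorem nonpos_of_mem_innerDual {K : Set (Vec d)} (hKneg : {y : Vec d | ∀ i, y i ≤ 0} ⊆ K)
    {u : Vec d} (hu : ∀ y ∈ K, 0 ≤ ⟪y, u⟫) (i : Fin d) : u i ≤ 0 := by
  have h := hu (-EuclideanSpace.single i 1) (hKneg fun j => by
    by_cases h : j = i <;> simp [h])
  simpa [Vec.inner_eq_sum] using h

def riskVector (r : (Ω → ℝ) → ℝ) (X : Ω → Vec d) : Vec d :=
  WithLp.toLp 2 fun i => r fun ω => X ω i

variable {r : (Ω → ℝ) → ℝ} {K : Set (Vec d)} {X : Ω → Vec d}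

theorem rho0R_add_cone_subset (hr : IsCoherentR μ p r) (hcom : ComonotonicAdditive μ p r)
    (hKcl : IsClosed K) (hKconv : Convex ℝ K) (hKcone : ∀ c : ℝ, 0 < c → ∀ y ∈ K, c • y ∈ K)
    (hKneg : {y : Vec d | ∀ i, y i ≤ 0} ⊆ K) (hX : MemLp X p μ)
    (hcoX : ∀ i j, Comonotonic μ (fun ω => X ω i) (fun ω => X ω j)) :
    rho0R μ p (fun _ => r) (fun ω => (X ω + ·) '' K) ⊆ {x | riskVector r X - x ∈ K} := by
  rintro x ⟨ξ, hξ, hsel, hξx⟩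
  have hrξ (i : Fin d) : r (fun ω => ξ ω i) ≤ x i := by
    linarith [hξx i, hr.cash _ (hξ.coord i) (x i)]
  refine mem_of_forall_inner_nonneg hKcl hKconv hKcone (hKneg fun i => le_rfl) fun u hu => ?_
  set w : Fin d → ℝ := fun i => -u i
  have hw (i : Fin d) : 0 ≤ w i := neg_nonneg.2 (nonpos_of_mem_innerDual hKneg hu i)
  have hξX : ∀ᵐ ω ∂μ, ∑ i, w i * ξ ω i ≤ ∑ i, w i * X ω i := by
    filter_upwards [hsel] with ω ⟨k, hk, hξk⟩
    have hku := hu k hk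
    rw [← hξk]
    simp only [Vec.inner_eq_sum, PiLp.add_apply, mul_add, Finset.sum_add_distrib, neg_mul,
      Finset.sum_neg_distrib, w] at hku ⊢
    linarith
  have hweighted : ∑ i, w i * r (fun ω => X ω i) ≤ ∑ i, w i * x i := calc
    _ = r (fun ω => ∑ i, w i * X ω i) :=
      (hr.map_sum_mul_of_comonotonic hcom hX.coord hcoX hw _).symm
    _ ≤ r (fun ω => ∑ i, w i * ξ ω i) :=
      hr.mono _ _ (memLp_finsetSum _ fun i _ => (hξ.coord i).const_mul _)
        (memLp_finsetSum _ fun i _ => (hX.coord i).const_mul _) hξX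
    _ ≤ ∑ i, w i * r (fun ω => ξ ω i) := hr.map_sum_mul_le hξ.coord hw _
    _ ≤ ∑ i, w i * x i := Finset.sum_le_sum fun i _ => mul_le_mul_of_nonneg_left (hrξ i) (hw i)
  simp only [Vec.inner_eq_sum, PiLp.sub_apply, riskVector, mul_sub, Finset.sum_sub_distrib,
    neg_mul, Finset.sum_neg_distrib, w] at hweighted ⊢
  linarith

theorem subset_rho0R_add_cone [IsFiniteMeasure μ] (hr : IsCoherentR μ p r) (hX : MemLp X p μ) :
    {x | riskVector r X - x ∈ K} ⊆ rho0R μ p (fun _ => r) (fun ω => (X ω + ·) '' K) := by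
  intro x hx
  refine ⟨fun ω => X ω + (riskVector r X - x), hX.add (memLp_const _), ae_of_all _ fun ω =>
    ⟨_, hx, rfl⟩, fun i => ?_⟩
  have hcash := hr.cash _ (hX.coord i) (riskVector r X i)
  simp only [PiLp.add_apply, PiLp.sub_apply, add_assoc, sub_add_cancel]
  simp only [riskVector] at hcash ⊢
  rw [hcash, sub_self]

end Portfolio

theorem statement11 {Ω : Type*} [MeasurableSpace Ω] (μ : Measure Ω) [IsProbabilityMeasure μ]
    {d : ℕ} (p : ℝ≥0∞)
    (r : (Ω → ℝ) → ℝ) (hr : IsCoherentR μ p r)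
    (hcom : ∀ ξ η : Ω → ℝ, MemLp ξ p μ → MemLp η p μ → Comonotonic μ ξ η →
      r (fun ω => ξ ω + η ω) = r ξ + r η)
    (K : Set (Vec d)) (hKcl : IsClosed K) (hKconv : Convex ℝ K)
    (hKcone : ∀ c : ℝ, 0 < c → ∀ y ∈ K, c • y ∈ K)
    (hKneg : {y : Vec d | ∀ i, y i ≤ 0} ⊆ K)
    (X : Ω → Vec d) (hX : MemLp X p μ)
    (hcoX : ∀ i j, Comonotonic μ (fun ω => X ω i) (fun ω => X ω j)) :
    closure (rho0R μ p (fun _ => r) (fun ω => (X ω + ·) '' K)) =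
      ((WithLp.toLp 2 (fun i => r (fun ω => X ω i)) : Vec d) + ·) '' ((fun k : Vec d => -k) '' K) := by
  have hρ : rho0R μ p (fun _ => r) (fun ω => (X ω + ·) '' K) = {x | riskVector r X - x ∈ K} :=
    (rho0R_add_cone_subset hr hcom hKcl hKconv hKcone hKneg hX hcoX).antisymm
      (subset_rho0R_add_cone hr hX)
  have hclosed : IsClosed {x | riskVector r X - x ∈ K} :=
    hKcl.preimage (continuous_const.sub continuous_id)
  rw [hρ, hclosed.closure_eq]
  ext x
  simp only [mem_ofPred_eq, image_image, mem_image, ← sub_eq_add_neg, sub_eq_iff_eq_add']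
  exact ⟨fun hx => ⟨_, hx, (sub_add_cancel _ x).symm⟩, fun ⟨k, hk, hxk⟩ => by
    rwa [riskVector, hxk, add_sub_cancel_right]⟩
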